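/- arXiv:2002.11860 — 3 statements merged into one kernel-verified Lean document; each statement's English description precedes it below -/
import Mathlib

section
/- Let (u_t)_{t≥0} be a sequence of nonnegative reals satisfying u_t ≤ ρ(u_{t−1} + K/(t+1)) for all t ≥ 1, where 0 < ρ < 1 and K > 0. Then for all t ≥ 2, u_t ≤ K(ρ/(1−ρ) · 2/(t+2) + ρ^{t/2} log t) + ρ^t u_0. -/
/-!
Unrolling the recursion gives `u t ≤ ρ^t u 0 + ∑_{k<t} ρ^(t-k) K/(k+2)`. Split the sum at `t/2`:
in the early terms the weight is at most `ρ^(t/2)` and the harmonic sum contributes `log t`;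
in the late terms `K/(k+2) ≤ 2K/(t+2)` and the weights form a geometric series bounded by
`ρ/(1-ρ)`.
-/

open Finset

theorem le_pow_mul_add_sum_of_le_mul_add {ρ : ℝ} (hρ : 0 ≤ ρ) {u b : ℕ → ℝ}
    (hrec : ∀ t, 1 ≤ t → u t ≤ ρ * (u (t - 1) + b t)) (n : ℕ) :
    u n ≤ ρ ^ n * u 0 + ∑ k ∈ range n, ρ ^ (n - k) * b (k + 1) := by
  induction n with
  | zero => simp
  | succ n ih =>
    have hsum : ∑ k ∈ range (n + 1), ρ ^ (n + 1 - k) * b (k + 1)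
        = ρ * ∑ k ∈ range n, ρ ^ (n - k) * b (k + 1) + ρ * b (n + 1) := by
      rw [sum_range_succ, mul_sum, Nat.add_sub_cancel_left, pow_one]
      congr 1
      refine sum_congr rfl fun k hk => ?_
      rw [Nat.sub_add_comm (mem_range.mp hk).le, pow_succ]
      ring
    calc u (n + 1) ≤ ρ * (u n + b (n + 1)) := hrec (n + 1) n.succ_pos
      _ ≤ ρ * (ρ ^ n * u 0 + ∑ k ∈ range n, ρ ^ (n - k) * b (k + 1) + b (n + 1)) := by gcongr
      _ = _ := by rw [hsum, pow_succ]; ring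

theorem sum_range_pow_sub_le {ρ : ℝ} (hρ : 0 ≤ ρ) (hρ1 : ρ < 1) (n : ℕ) :
    ∑ k ∈ range n, ρ ^ (n - k) ≤ ρ / (1 - ρ) := by
  have hreflect : ∑ k ∈ range n, ρ ^ (n - k) = ρ * ∑ j ∈ range n, ρ ^ j := by
    rw [← sum_range_reflect, mul_sum]
    refine sum_congr rfl fun j hj => ?_
    rw [← pow_succ']
    congr 1
    have := mem_range.mp hj
    omega
  have hgeom := geom_sum_Ico_le_of_lt_one (m := 0) (n := n) hρ hρ1
  rw [← range_eq_Ico, pow_zero] at hgeom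
  rw [hreflect, ← mul_one_div]
  exact mul_le_mul_of_nonneg_left hgeom hρ

theorem sum_range_inv_add_two_le_log (m : ℕ) :
    ∑ k ∈ range m, ((k : ℝ) + 2)⁻¹ ≤ Real.log (m + 1) := by
  have h := harmonic_le_one_add_log (m + 1)
  rw [harmonic, sum_range_succ'] at h
  push_cast [add_assoc, one_add_one_eq_two, zero_add, inv_one] at h
  linarith

theorem sum_range_half_pow_sub_mul_le {ρ K : ℝ} (hρ : 0 < ρ) (hρ1 : ρ ≤ 1) (hK : 0 ≤ K)
    {t : ℕ} (ht : 1 ≤ t) :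
    ∑ k ∈ range (t / 2), ρ ^ (t - k) * (K / ((k : ℝ) + 2))
      ≤ K * (ρ ^ ((t : ℝ) / 2) * Real.log t) := by
  have hpow : ∀ k ∈ range (t / 2), ρ ^ (t - k) ≤ ρ ^ ((t : ℝ) / 2) := fun k hk => by
    have hk := mem_range.mp hk
    have hexp : (t : ℝ) / 2 ≤ ((t - k : ℕ) : ℝ) := by
      rw [div_le_iff₀ two_pos]
      exact_mod_cast (by omega : t ≤ (t - k) * 2)
    rw [← Real.rpow_natCast]
    exact Real.rpow_le_rpow_of_exponent_ge hρ hρ1 hexp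
  have hlog : Real.log ((t / 2 : ℕ) + 1) ≤ Real.log t :=
    Real.log_le_log (by positivity) (by exact_mod_cast (by omega : t / 2 + 1 ≤ t))
  calc ∑ k ∈ range (t / 2), ρ ^ (t - k) * (K / ((k : ℝ) + 2))
      ≤ ∑ k ∈ range (t / 2), ρ ^ ((t : ℝ) / 2) * (K / ((k : ℝ) + 2)) :=
        sum_le_sum fun k hk => by gcongr; exact hpow k hk
    _ = K * ρ ^ ((t : ℝ) / 2) * ∑ k ∈ range (t / 2), ((k : ℝ) + 2)⁻¹ := by
        rw [mul_sum]; simp only [div_eq_mul_inv]; ring_nf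
    _ ≤ K * ρ ^ ((t : ℝ) / 2) * Real.log t := by
        gcongr
        exact (sum_range_inv_add_two_le_log _).trans hlog
    _ = K * (ρ ^ ((t : ℝ) / 2) * Real.log t) := by ring

theorem sum_Ico_half_pow_sub_mul_le {ρ K : ℝ} (hρ : 0 ≤ ρ) (hρ1 : ρ < 1) (hK : 0 ≤ K) (t : ℕ) :
    ∑ k ∈ Ico (t / 2) t, ρ ^ (t - k) * (K / ((k : ℝ) + 2))
      ≤ K * (ρ / (1 - ρ) * (2 / (t + 2))) := by
  have hterm : ∀ k ∈ Ico (t / 2) t, K / ((k : ℝ) + 2) ≤ K * (2 / (t + 2)) := fun k hk => by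
    have hk : (t : ℝ) ≤ 2 * k + 1 := by exact_mod_cast (by have := (mem_Ico.mp hk).1; omega)
    rw [mul_div_assoc', div_le_div_iff₀ (by positivity) (by positivity)]
    nlinarith
  calc ∑ k ∈ Ico (t / 2) t, ρ ^ (t - k) * (K / ((k : ℝ) + 2))
      ≤ ∑ k ∈ Ico (t / 2) t, ρ ^ (t - k) * (K * (2 / (t + 2))) :=
        sum_le_sum fun k hk => by gcongr; exact hterm k hk
    _ ≤ ∑ k ∈ range t, ρ ^ (t - k) * (K * (2 / (t + 2))) :=
        sum_le_sum_of_subset_of_nonneg (fun k hk => mem_range.mpr (mem_Ico.mp hk).2)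
          fun _ _ _ => by positivity
    _ ≤ ρ / (1 - ρ) * (K * (2 / (t + 2))) := by
        rw [← sum_mul]; gcongr; exact sum_range_pow_sub_le hρ hρ1 t
    _ = K * (ρ / (1 - ρ) * (2 / (t + 2))) := by ring

theorem stmt_1_general (ρ K : ℝ) (hρ : 0 < ρ) (hρ1 : ρ < 1) (hK : 0 < K)
    (u : ℕ → ℝ)
    (hrec : ∀ t : ℕ, 1 ≤ t → u t ≤ ρ * (u (t - 1) + K / (t + 1))) :
    ∀ t : ℕ, 2 ≤ t →
      u t ≤ K * (ρ / (1 - ρ) * (2 / (t + 2)) + ρ ^ ((t : ℝ) / 2) * Real.log t)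
            + ρ ^ t * u 0 := by
  intro t ht
  have hunroll : u t ≤ ρ ^ t * u 0 + ∑ k ∈ range t, ρ ^ (t - k) * (K / ((k : ℝ) + 2)) := by
    simpa [add_assoc, one_add_one_eq_two] using
      le_pow_mul_add_sum_of_le_mul_add hρ.le (b := fun s => K / ((s : ℝ) + 1)) hrec t
  rw [← sum_range_add_sum_Ico _ (Nat.div_le_self t 2)] at hunroll
  have hhead := sum_range_half_pow_sub_mul_le hρ hρ1.le hK.le (by omega : 1 ≤ t)
  have htail := sum_Ico_half_pow_sub_mul_le hρ.le hρ1 hK.le t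
  linarith

theorem stmt_1 (ρ K : ℝ) (hρ : 0 < ρ) (hρ1 : ρ < 1) (hK : 0 < K)
    (u : ℕ → ℝ) (hu : ∀ t, 0 ≤ u t)
    (hrec : ∀ t : ℕ, 1 ≤ t → u t ≤ ρ * (u (t - 1) + K / (t + 1))) :
    ∀ t : ℕ, 2 ≤ t →
      u t ≤ K * (ρ / (1 - ρ) * (2 / (t + 2)) + ρ ^ ((t : ℝ) / 2) * Real.log t)
            + ρ ^ t * u 0 :=
  stmt_1_general ρ K hρ hρ1 hK u hrec
end

section
/- Let f: ℝⁿ → ℝ be convex and (L/n)-smooth with respect to the ℓ₂ norm, X ∈ ℝ^{n×d}, and C ⊆ ℝ^d compact convex. Fix w_{t−1} ∈ C, α ∈ ℝⁿ, let s ∈ argmin_{v∈C} ⟨α, Xv⟩, γ ∈ [0,1], and w_t = (1−γ)w_{t−1} + γs. Let w_⋆ minimize f(Xw) over C, ε_t = f(Xw_t) − f(Xw_⋆), ε_{t−1} = f(Xw_{t−1}) − f(Xw_⋆), H = ‖α − ∇f(Xw_{t−1})‖₁, D₂ = max_{u,v∈C}‖X(u−v)‖₂, D_∞ = max_{u,v∈C}‖X(u−v)‖_∞.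 Then ε_t ≤ (1−γ)ε_{t−1} + γ²·LD₂²/(2n) + γ·D_∞·H. -/
open RealInnerProductSpace

/-! On the segment `t ↦ x + t • d` the subgradient inequality gives
`φ (t + h) - φ t ≤ h ψ (t + h)`, so on a uniform partition of `[0, 1]` the Lipschitz bound on the
slopes `ψ` turns the telescoping sum into the quadratic upper bound
`f (x + d) ≤ f x + ⟪g x, d⟫ + K / 2 ‖d‖²`, up to an error `K / 2N` that vanishes as `N → ∞`.
For the Frank–Wolfe step `d = γ (s - x)` the linear term splits as
`⟪g x - α, s - z⟫ + (⟪α, s⟫ - ⟪α, z⟫) + ⟪g x, z - x⟫`: Hölder's inequality bounds the first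
summand by `D_∞ H`, the choice of `s` makes the second nonpositive, and convexity bounds the
third by `f z - f x`. -/

theorem le_add_of_subgradient_of_le_linear {φ ψ : ℝ → ℝ} {K : ℝ}
    (hsub : ∀ s t, φ t + ψ t * (s - t) ≤ φ s) (hψ : ∀ t, 0 ≤ t → ψ t ≤ ψ 0 + K * t) :
    φ 1 ≤ φ 0 + ψ 0 + K / 2 := by
  have hpartition : ∀ m : ℝ, 0 < m → ∀ k : ℕ,
      φ (k / m) ≤ φ 0 + k / m * ψ 0 + K * (k * (k + 1)) / (2 * m ^ 2) := by
    intro m hm k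
    induction k with
    | zero => simp
    | succ k ih =>
      have hstep := hsub (k / m) ((k + 1) / m)
      have hslope := hψ ((k + 1) / m) (by positivity)
      have hslope' := mul_le_mul_of_nonneg_right hslope (inv_pos.2 hm).le
      push_cast
      have hgap : ψ ((k + 1) / m) * (k / m - (k + 1) / m) = -(ψ ((k + 1) / m) * m⁻¹) := by
        field_simp; ring
      have hcollect :
          (ψ 0 + K * ((k + 1) / m)) * m⁻¹ + (k / m * ψ 0 + K * (k * (k + 1)) / (2 * m ^ 2))
            = (k + 1) / m * ψ 0 + K * ((k + 1) * (k + 1 + 1)) / (2 * m ^ 2) := by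
        field_simp; ring
      linarith
  have hbound : ∀ N : ℕ, φ 1 ≤ φ 0 + ψ 0 + K / 2 + K / 2 * (1 / ((N : ℝ) + 1)) := by
    intro N
    have hm : (0 : ℝ) < N + 1 := by positivity
    have h := hpartition (N + 1) hm (N + 1)
    push_cast at h
    rw [div_self hm.ne', one_mul] at h
    convert h using 1
    field_simp; ring
  have hlim := (tendsto_one_div_add_atTop_nhds_zero_nat.const_mul (K / 2)).const_add
    (φ 0 + ψ 0 + K / 2)
  rw [mul_zero, add_zero] at hlim
  exact ge_of_tendsto' hlim hbound

theorem nonneg_of_norm_sub_le_mul_norm_sub {E F : Type*} [NormedAddCommGroup E] [Nontrivial E]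
    [SeminormedAddCommGroup F] {g : E → F} {K : ℝ}
    (hlip : ∀ x y, ‖g x - g y‖ ≤ K * ‖x - y‖) : 0 ≤ K := by
  obtain ⟨x, hx⟩ := exists_ne (0 : E)
  have h := (norm_nonneg _).trans (hlip x 0)
  rw [sub_zero] at h
  exact nonneg_of_mul_nonneg_left h (norm_pos_iff.2 hx)

section InnerProductSpace

variable {E : Type*} [NormedAddCommGroup E] [InnerProductSpace ℝ E]

theorem le_add_inner_add_of_subgradient_of_lipschitz {f : E → ℝ} {g : E → E} {K : ℝ}
    (hsub : ∀ x y, f x + ⟪g x, y - x⟫ ≤ f y) (hlip : ∀ x y, ‖g x - g y‖ ≤ K * ‖x - y‖)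
    (x d : E) : f (x + d) ≤ f x + ⟪g x, d⟫ + K / 2 * ‖d‖ ^ 2 := by
  have h := le_add_of_subgradient_of_le_linear (φ := fun t : ℝ => f (x + t • d))
    (ψ := fun t : ℝ => ⟪g (x + t • d), d⟫) (K := K * ‖d‖ ^ 2) ?_ ?_
  · simp only [one_smul, zero_smul, add_zero] at h
    linarith
  · intro s t
    have h := hsub (x + t • d) (x + s • d)
    rwa [add_sub_add_left_eq_sub, ← sub_smul, inner_smul_right, mul_comm] at h
  · intro t ht
    have hcs := real_inner_le_norm (g (x + t • d) - g x) d
    have hg := hlip (x + t • d) x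
    rw [add_sub_cancel_left, norm_smul, Real.norm_of_nonneg ht] at hg
    simp only [zero_smul, add_zero, inner_sub_left] at hcs ⊢
    nlinarith [norm_nonneg d]

theorem frankWolfe_step_le {f : E → ℝ} {g : E → E} {K : ℝ}
    (hsub : ∀ x y, f x + ⟪g x, y - x⟫ ≤ f y) (hlip : ∀ x y, ‖g x - g y‖ ≤ K * ‖x - y‖)
    (hK : 0 ≤ K) {x s z α : E} {γ D B : ℝ} (hγ : 0 ≤ γ) (hs : ⟪α, s⟫ ≤ ⟪α, z⟫)
    (hD : ‖s - x‖ ≤ D) (hB : ⟪g x - α, s - z⟫ ≤ B) :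
    f (x + γ • (s - x)) - f z ≤ (1 - γ) * (f x - f z) + γ ^ 2 * (K * D ^ 2) / 2 + γ * B := by
  have hdescent := le_add_inner_add_of_subgradient_of_lipschitz hsub hlip x (γ • (s - x))
  have hsplit : ⟪g x, s - x⟫ = ⟪g x - α, s - z⟫ + (⟪α, s⟫ - ⟪α, z⟫) + ⟪g x, z - x⟫ := by
    simp only [inner_sub_left, inner_sub_right]; ring
  have hlin : ⟪g x, s - x⟫ ≤ B + (f z - f x) := by linarith [hsub x z]
  have hquad : ‖s - x‖ ^ 2 ≤ D ^ 2 := pow_le_pow_left₀ (norm_nonneg _) hD 2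
  rw [inner_smul_right, norm_smul, mul_pow, Real.norm_of_nonneg hγ] at hdescent
  have hKγ : 0 ≤ K / 2 * γ ^ 2 := by positivity
  nlinarith [mul_le_mul_of_nonneg_left hlin hγ, mul_le_mul_of_nonneg_left hquad hKγ]

end InnerProductSpace

theorem EuclideanSpace.real_inner_toLp_toLp {ι : Type*} [Fintype ι] (u v : ι → ℝ) :
    ⟪WithLp.toLp 2 u, WithLp.toLp 2 v⟫ = ∑ i, u i * v i := by
  simp [EuclideanSpace.inner_toLp_toLp, dotProduct, mul_comm]

theorem EuclideanSpace.norm_toLp_eq_sqrt {ι : Type*} [Fintype ι] (v : ι → ℝ) :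
    ‖WithLp.toLp 2 v‖ = √(∑ i, v i ^ 2) := by
  simp [EuclideanSpace.norm_eq]

theorem Finset.sum_mul_le_mul_sum_abs {ι : Type*} (t : Finset ι) {a b : ι → ℝ} {M : ℝ}
    (hb : ∀ i ∈ t, |b i| ≤ M) : ∑ i ∈ t, a i * b i ≤ M * ∑ i ∈ t, |a i| := by
  rw [Finset.mul_sum]
  refine Finset.sum_le_sum fun i hi => ?_
  calc a i * b i ≤ |a i| * |b i| := (le_abs_self _).trans (abs_mul _ _).le
    _ ≤ M * |a i| := by rw [mul_comm]; exact mul_le_mul_of_nonneg_right (hb i hi) (abs_nonneg _)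

theorem abs_sub_le_of_isGreatest_iSup_abs_sub {κ ι : Type*} [Finite ι] {φ : κ → ι → ℝ}
    {C : Set κ} {D : ℝ} (hD : IsGreatest {r : ℝ | ∃ u ∈ C, ∃ v ∈ C, r = ⨆ i, |φ u i - φ v i|} D)
    {u v : κ} (hu : u ∈ C) (hv : v ∈ C) (i : ι) : |φ u i - φ v i| ≤ D :=
  (le_ciSup (Set.finite_range _).bddAbove i).trans (hD.2 ⟨u, hu, v, hv, rfl⟩)

theorem stmt_7_general {n d : ℕ} (L : ℝ)
    (f : (Fin n → ℝ) → ℝ) (g : (Fin n → ℝ) → (Fin n → ℝ))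
    -- convexity of differentiable `f` via the gradient inequality
    (hconv : ∀ θ θ' : Fin n → ℝ, f θ + ∑ i, g θ i * (θ' i - θ i) ≤ f θ')
    -- `(L/n)`-smoothness in the `ℓ₂` norm: the gradient is `(L/n)`-Lipschitz
    (hlip : ∀ θ θ' : Fin n → ℝ,
      Real.sqrt (∑ i, (g θ i - g θ' i) ^ 2)
        ≤ (L / n) * Real.sqrt (∑ i, (θ i - θ' i) ^ 2))
    (X : Matrix (Fin n) (Fin d) ℝ) (C : Set (Fin d → ℝ))
    (wprev : Fin d → ℝ) (hwprev : wprev ∈ C)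
    (α : Fin n → ℝ)
    (s : Fin d → ℝ) (hs : s ∈ C)
    (hsmin : ∀ v ∈ C, ∑ i, α i * X.mulVec s i ≤ ∑ i, α i * X.mulVec v i)
    (γ : ℝ) (hγ : γ ∈ Set.Icc (0 : ℝ) 1)
    (wstar : Fin d → ℝ) (hwstar : wstar ∈ C)
    (D2 Dinf : ℝ)
    (hD2 : IsGreatest {r : ℝ | ∃ u ∈ C, ∃ v ∈ C,
      r = Real.sqrt (∑ i, (X.mulVec u i - X.mulVec v i) ^ 2)} D2)
    (hDinf : IsGreatest {r : ℝ | ∃ u ∈ C, ∃ v ∈ C,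
      r = ⨆ i, |X.mulVec u i - X.mulVec v i|} Dinf) :
    f (X.mulVec fun j => (1 - γ) * wprev j + γ * s j) - f (X.mulVec wstar)
      ≤ (1 - γ) * (f (X.mulVec wprev) - f (X.mulVec wstar))
        + γ ^ 2 * (L * D2 ^ 2) / (2 * n)
        + γ * Dinf * ∑ i, |α i - g (X.mulVec wprev) i| := by
  let F : EuclideanSpace ℝ (Fin n) → ℝ := fun x => f x.ofLp
  let G : EuclideanSpace ℝ (Fin n) → EuclideanSpace ℝ (Fin n) := fun x => WithLp.toLp 2 (g x.ofLp)
  have hsub : ∀ x y, F x + ⟪G x, y - x⟫ ≤ F y := fun x y => by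
    rw [← WithLp.toLp_ofLp 2 (y - x), WithLp.ofLp_sub, EuclideanSpace.real_inner_toLp_toLp]
    exact hconv x.ofLp y.ofLp
  have hlipG : ∀ x y, ‖G x - G y‖ ≤ L / n * ‖x - y‖ := fun x y => by
    rw [← WithLp.toLp_ofLp 2 (x - y), ← WithLp.toLp_sub, EuclideanSpace.norm_toLp_eq_sqrt,
      EuclideanSpace.norm_toLp_eq_sqrt]
    exact hlip x.ofLp y.ofLp
  have hK : 0 ≤ L / n := by
    rcases n.eq_zero_or_pos with rfl | hn
    · simp
    · have : Nonempty (Fin n) := ⟨⟨0, hn⟩⟩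
      exact nonneg_of_norm_sub_le_mul_norm_sub hlipG
  have hstep := frankWolfe_step_le hsub hlipG hK (x := WithLp.toLp 2 (X.mulVec wprev))
    (s := WithLp.toLp 2 (X.mulVec s)) (z := WithLp.toLp 2 (X.mulVec wstar)) (α := WithLp.toLp 2 α)
    (D := D2) (B := Dinf * ∑ i, |α i - g (X.mulVec wprev) i|) hγ.1 ?_ ?_ ?_
  · have hiter : (X.mulVec fun j => (1 - γ) * wprev j + γ * s j)
        = X.mulVec wprev + γ • (X.mulVec s - X.mulVec wprev) := by
      rw [← Matrix.mulVec_sub, ← Matrix.mulVec_smul, ← Matrix.mulVec_add]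
      congr 1; ext j; simp only [Pi.add_apply, Pi.smul_apply, Pi.sub_apply, smul_eq_mul]; ring
    have hquad : γ ^ 2 * (L * D2 ^ 2) / (2 * n) = γ ^ 2 * (L / n * D2 ^ 2) / 2 := by ring
    rw [hiter, hquad, mul_assoc γ Dinf]
    exact hstep
  · simpa [EuclideanSpace.real_inner_toLp_toLp] using hsmin wstar hwstar
  · rw [← WithLp.toLp_sub, EuclideanSpace.norm_toLp_eq_sqrt]
    exact hD2.2 ⟨s, hs, wprev, hwprev, rfl⟩
  · rw [← WithLp.toLp_sub, ← WithLp.toLp_sub, EuclideanSpace.real_inner_toLp_toLp]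
    simp only [abs_sub_comm (α _)]
    exact Finset.sum_mul_le_mul_sum_abs _ fun i _ =>
      abs_sub_le_of_isGreatest_iSup_abs_sub hDinf hs hwstar i

/-- Key descent lemma for the (stochastic) Frank-Wolfe step with an arbitrary
direction `α`. `g` is the gradient of the convex function `f`, which is
`(L/n)`-smooth with respect to the `ℓ₂` norm. -/
theorem stmt_7 {n d : ℕ} (hn : 0 < n) (L : ℝ)
    (f : (Fin n → ℝ) → ℝ) (g : (Fin n → ℝ) → (Fin n → ℝ))
    -- convexity of differentiable `f` via the gradient inequality
    (hconv : ∀ θ θ' : Fin n → ℝ, f θ + ∑ i, g θ i * (θ' i - θ i) ≤ f θ')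
    -- `(L/n)`-smoothness in the `ℓ₂` norm: the gradient is `(L/n)`-Lipschitz
    (hlip : ∀ θ θ' : Fin n → ℝ,
      Real.sqrt (∑ i, (g θ i - g θ' i) ^ 2)
        ≤ (L / n) * Real.sqrt (∑ i, (θ i - θ' i) ^ 2))
    (X : Matrix (Fin n) (Fin d) ℝ) (C : Set (Fin d → ℝ))
    (hCcomp : IsCompact C) (hCconv : Convex ℝ C)
    (wprev : Fin d → ℝ) (hwprev : wprev ∈ C)
    (α : Fin n → ℝ)
    (s : Fin d → ℝ) (hs : s ∈ C)
    (hsmin : ∀ v ∈ C, ∑ i, α i * X.mulVec s i ≤ ∑ i, α i * X.mulVec v i)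
    (γ : ℝ) (hγ : γ ∈ Set.Icc (0 : ℝ) 1)
    (wstar : Fin d → ℝ) (hwstar : wstar ∈ C)
    (hmin : ∀ v ∈ C, f (X.mulVec wstar) ≤ f (X.mulVec v))
    (D2 Dinf : ℝ)
    (hD2 : IsGreatest {r : ℝ | ∃ u ∈ C, ∃ v ∈ C,
      r = Real.sqrt (∑ i, (X.mulVec u i - X.mulVec v i) ^ 2)} D2)
    (hDinf : IsGreatest {r : ℝ | ∃ u ∈ C, ∃ v ∈ C,
      r = ⨆ i, |X.mulVec u i - X.mulVec v i|} Dinf) :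
    f (X.mulVec fun j => (1 - γ) * wprev j + γ * s j) - f (X.mulVec wstar)
      ≤ (1 - γ) * (f (X.mulVec wprev) - f (X.mulVec wstar))
        + γ ^ 2 * (L * D2 ^ 2) / (2 * n)
        + γ * Dinf * ∑ i, |α i - g (X.mulVec wprev) i| :=
  stmt_7_general L f g hconv hlip X C wprev hwprev α s hs hsmin γ hγ wstar hwstar D2 Dinf hD2 hDinf
end

section
/- Suppose (ε_t), (H_t) are sequences with ε_t ≤ (1−γ_t)ε_{t−1} + γ_t² A + γ_t B H_t for all t ≥ 1, where γ_t = 2/(t+2), A, B ≥ 0, and H_t ≤ C/(t+2) for some C ≥ 0, all terms nonnegative. Then for all t ≥ 1, ε_t ≤ (2ε_0 + 4At + 4BCt)/((t+1)(t+2)); in particular ε_t = O((A + BC)/t). -/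
theorem stmt_13 (A B C : ℝ) (hA : 0 ≤ A) (hB : 0 ≤ B) (hC : 0 ≤ C)
    (ε H : ℕ → ℝ) (hε : ∀ t, 0 ≤ ε t) (hH : ∀ t, 0 ≤ H t)
    (hHle : ∀ t : ℕ, 1 ≤ t → H t ≤ C / (t + 2))
    (hrec : ∀ t : ℕ, 1 ≤ t →
      ε t ≤ (1 - 2 / ((t : ℝ) + 2)) * ε (t - 1)
        + (2 / ((t : ℝ) + 2)) ^ 2 * A + (2 / ((t : ℝ) + 2)) * B * H t) :
    ∀ t : ℕ, 1 ≤ t →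
      ε t ≤ (2 * ε 0 + 4 * A * t + 4 * B * C * t) / ((t + 1) * (t + 2)) := by
  have aux : ∀ k : ℕ, ((k : ℝ) + 1) * ((k : ℝ) + 2) * ε k
      ≤ 2 * ε 0 + (4 * A + 4 * B * C) * k := by
    intro k
    induction k with
    | zero => norm_num
    | succ k IH =>
      have hx : (0 : ℝ) ≤ (k : ℝ) := Nat.cast_nonneg k
      have h1 := hrec (k + 1) (by omega)
      have h2 := hHle (k + 1) (by omega)
      rw [show (k + 1) - 1 = k from rfl] at h1
      push_cast at h1 h2 ⊢
      set y : ℝ := (k : ℝ) + 1 + 2 with hy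
      have hyx : y = (k : ℝ) + 3 := by rw [hy]; ring
      have hy0 : (0 : ℝ) < y := by rw [hyx]; positivity
      set g : ℝ := 2 / y with hgdef
      have hg : g * y = 2 := by rw [hgdef]; field_simp
      have hg0 : 0 ≤ g := by rw [hgdef]; positivity
      have h2' : H (k + 1) * y ≤ C := (le_div_iff₀ hy0).mp h2
      have m1 : (y - 1) * y * ε (k + 1)
          ≤ (y - 1) * y * ((1 - g) * ε k + g ^ 2 * A + g * B * H (k + 1)) := by
        refine mul_le_mul_of_nonneg_left h1 ?_
        rw [hyx]; nlinarith
      have e1 : (y - 1) * y * ((1 - g) * ε k + g ^ 2 * A + g * B * H (k + 1))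
          = (y - 1) * (y - 2) * ε k + 2 * (2 - g) * A + (2 * y - 2) * B * H (k + 1) := by
        linear_combination (-(y - 1) * ε k + ((y - 1) * g + 2) * A + (y - 1) * B * H (k + 1)) * hg
      rw [e1, hyx] at m1
      rw [hyx]
      nlinarith [m1, IH, mul_nonneg hg0 hA, mul_nonneg hB (hH (k + 1)),
        mul_le_mul_of_nonneg_left h2' hB, mul_nonneg hB hC, hx, hyx]
  intro t ht
  have hpos : (0 : ℝ) < ((t : ℝ) + 1) * ((t : ℝ) + 2) := by positivity
  rw [le_div_iff₀ hpos]
  nlinarith [aux t]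
end
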